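/- arXiv:1704.03771 — 4 statements merged into one kernel-verified Lean document; each statement's English description precedes it below -/
import Mathlib

section
/- Let a Beurling generalized number system be given and suppose N(x)/x → a as x → ∞ for some a ≥ 0. Then m is slowly oscillating: for every c ≥ 1, limsup_{x→∞} sup_{η∈[1,c]} |m(ηx) − m(x)| ≤ a log c. -/
open Filter MeasureTheory Set Topology
open scoped Classical

/-- Value `n(α) = ∏ p_k^{α(k)}` of a generalized integer `α`. -/
noncomputable def nval (p : ℕ → ℝ) (α : ℕ →₀ ℕ) : ℝ := α.prod fun k e => p k ^ e

/-- Counting function `N(x)` of the generalized integers. -/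
noncomputable def Ncount (p : ℕ → ℝ) (x : ℝ) : ℕ := Nat.card {α : ℕ →₀ ℕ // nval p α ≤ x}

/-- Riemann prime counting function `Π(x) = Σ_{j ≥ 1} π(x^{1/j})/j`. -/
noncomputable def PiCount (p : ℕ → ℝ) (x : ℝ) : ℝ :=
  ∑' j : ℕ, (Nat.card {k : ℕ // p k ≤ x ^ ((1 : ℝ) / (j + 1))} : ℝ) / (j + 1)

/-- `log ζ(s) = ∫_1^∞ x^{-s} dΠ(x)`, the Lebesgue–Stieltjes integral against the purely
atomic measure `dΠ`, which carries mass `1/j` at each point `p_k^j`. -/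
noncomputable def logZeta (p : ℕ → ℝ) (s : ℂ) : ℂ :=
  ∑' (j : ℕ) (k : ℕ), ((p k : ℂ) ^ (-s * (j + 1))) / (j + 1)

/-- The Beurling zeta function `ζ(s) = exp(∫_1^∞ x^{-s} dΠ(x))`. -/
noncomputable def zetaB (p : ℕ → ℝ) (s : ℂ) : ℂ := Complex.exp (logZeta p s)

/-- Beurling Möbius function. -/
noncomputable def muB (α : ℕ →₀ ℕ) : ℝ :=
  if ∀ k, α k ≤ 1 then (-1 : ℝ) ^ α.support.card else 0

/-- `m(x) = Σ_{n(α) ≤ x} μ(α)/n(α)`. -/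
noncomputable def mB (p : ℕ → ℝ) (x : ℝ) : ℝ :=
  ∑' α : {α : ℕ →₀ ℕ // nval p α ≤ x}, muB α / nval p α

/-- Beurling Liouville function. -/
noncomputable def lambdaB (α : ℕ →₀ ℕ) : ℝ := (-1 : ℝ) ^ (α.sum fun _ e => e)

/-- `ℓ(x) = Σ_{n(α) ≤ x} λ(α)/n(α)`. -/
noncomputable def ellB (p : ℕ → ℝ) (x : ℝ) : ℝ :=
  ∑' α : {α : ℕ →₀ ℕ // nval p α ≤ x}, lambdaB α / nval p α

/-- An analytic function `G` on `{Re s > 1}` has `A_loc`-boundary behavior on `1 + iU`: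
for every compact `K ⊂ U` there is `g ∈ L¹(ℝ)` with `G(σ + it) → ∫ g(x) e^{-itx} dx`
as `σ → 1⁺`, uniformly for `t ∈ K`. -/
def ALocBoundary (G : ℂ → ℂ) (U : Set ℝ) : Prop :=
  ∀ K : Set ℝ, K ⊆ U → IsCompact K → ∃ g : ℝ → ℂ, Integrable g ∧
    TendstoUniformlyOn (fun σ : ℝ => fun t : ℝ => G (σ + t * Complex.I))
      (fun t : ℝ => ∫ x : ℝ, g x * Complex.exp (-(t * x) * Complex.I)) (𝓝[>] 1) K

/-- An analytic function `G` on `{Re s > 1}` has local pseudofunction boundary behavior on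
`1 + iU`: for every smooth compactly supported `φ` with `supp φ ⊂ U` and every `x`, the limit
`g_φ(x) = lim_{σ→1⁺} ∫ G(σ + it) φ(t) e^{-ixt} dt` exists, and `g_φ(x) → 0` as `|x| → ∞`. -/
def LocalPseudofunctionBoundary (G : ℂ → ℂ) (U : Set ℝ) : Prop :=
  ∀ φ : ℝ → ℂ, ContDiff ℝ (⊤ : ℕ∞) φ → HasCompactSupport φ → tsupport φ ⊆ U →
    ∃ gφ : ℝ → ℂ,
      (∀ x : ℝ, Tendsto (fun σ : ℝ => ∫ t : ℝ, G (σ + t * Complex.I) * φ t *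
          Complex.exp (-(x * t) * Complex.I)) (𝓝[>] 1) (𝓝 (gφ x))) ∧
      Tendsto gφ (cocompact ℝ) (𝓝 0)

/-- `Π₀(x) = ∫_1^x (1 - 1/u)/log u du`. -/
noncomputable def Pi0 (x : ℝ) : ℝ := ∫ u in (1:ℝ)..x, (1 - 1/u) / Real.log u

section aux
variable {p : ℕ → ℝ}

lemma one_le_prod_aux {s : Finset ℕ} {f : ℕ → ℝ} (h : ∀ i ∈ s, (1:ℝ) ≤ f i) :
    1 ≤ ∏ i ∈ s, f i := by
  calc (1:ℝ) = ∏ _i ∈ s, (1:ℝ) := (Finset.prod_const_one).symm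
  _ ≤ ∏ i ∈ s, f i := Finset.prod_le_prod (fun i _ => zero_le_one) h

lemma one_le_nval (hmono : Monotone p) (hp1 : 1 < p 0) (α : ℕ →₀ ℕ) : 1 ≤ nval p α := by
  show (1:ℝ) ≤ ∏ k ∈ α.support, p k ^ α k
  exact one_le_prod_aux fun k _ => one_le_pow₀ (hp1.le.trans (hmono (Nat.zero_le k)))

lemma pow_le_nval (hmono : Monotone p) (hp1 : 1 < p 0) (α : ℕ →₀ ℕ) (k : ℕ) :
    p k ^ α k ≤ nval p α := by
  show p k ^ α k ≤ ∏ j ∈ α.support, p j ^ α j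
  have h1 : ∀ j ∈ α.support, (1:ℝ) ≤ p j ^ α j := fun j _ =>
    one_le_pow₀ (hp1.le.trans (hmono (Nat.zero_le j)))
  by_cases hk : α k = 0
  · rw [hk, pow_zero]; exact one_le_prod_aux h1
  · have hmem : k ∈ α.support := Finsupp.mem_support_iff.2 hk
    have herase : (1:ℝ) ≤ ∏ j ∈ α.support.erase k, p j ^ α j :=
      one_le_prod_aux fun j hj => h1 j (Finset.mem_of_mem_erase hj)
    calc p k ^ α k = p k ^ α k * 1 := (mul_one _).symm
    _ ≤ p k ^ α k * ∏ j ∈ α.support.erase k, p j ^ α j := by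
        have h0 : (0:ℝ) ≤ p k ^ α k := le_trans zero_le_one (h1 k hmem)
        exact mul_le_mul_of_nonneg_left herase h0
    _ = ∏ j ∈ α.support, p j ^ α j := Finset.mul_prod_erase _ (fun j => p j ^ α j) hmem

lemma finite_S (hmono : Monotone p) (hp1 : 1 < p 0) (hptop : Tendsto p atTop atTop)
    (x : ℝ) : {α : ℕ →₀ ℕ | nval p α ≤ x}.Finite := by
  obtain ⟨K, hK⟩ := eventually_atTop.1 (hptop.eventually_gt_atTop x)
  obtain ⟨E, hE⟩ := pow_unbounded_of_one_lt x hp1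
  rw [← Set.finite_coe_iff]
  have hbd : ∀ α : {α : ℕ →₀ ℕ | nval p α ≤ x}, ∀ k, (α : ℕ →₀ ℕ) k < E + 1 := by
    rintro ⟨α, hα⟩ k
    show α k < E + 1
    have h1 : p 0 ^ α k ≤ p k ^ α k := by
      gcongr
      exact hmono (Nat.zero_le k)
    have h2 : p 0 ^ α k < p 0 ^ E := lt_of_le_of_lt (h1.trans ((pow_le_nval hmono hp1 α k).trans hα)) hE
    have := (pow_lt_pow_iff_right₀ hp1).1 h2
    omega
  have hzero : ∀ α : {α : ℕ →₀ ℕ | nval p α ≤ x}, ∀ k, K ≤ k → (α : ℕ →₀ ℕ) k = 0 := by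
    rintro ⟨α, hα⟩ k hk
    by_contra h
    have h1 : p k ≤ p k ^ α k := le_self_pow₀ (hp1.le.trans (hmono (Nat.zero_le k))) h
    exact absurd ((h1.trans ((pow_le_nval hmono hp1 α k).trans hα))) (not_le.2 (hK k hk))
  refine Finite.of_injective
    (fun α : {α : ℕ →₀ ℕ | nval p α ≤ x} => fun k : Fin K => (⟨(α : ℕ →₀ ℕ) k, hbd α k⟩ : Fin (E + 1)))
    ?_
  intro α β h
  ext k
  rcases lt_or_ge k K with hk | hk
  · exact congrArg Fin.val (congrFun h ⟨k, hk⟩)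
  · rw [hzero α k hk, hzero β k hk]

lemma Ncount_eq {x : ℝ} (hfin : {α : ℕ →₀ ℕ | nval p α ≤ x}.Finite) :
    Ncount p x = hfin.toFinset.card := by
  rw [Ncount]
  change Nat.card {α : ℕ →₀ ℕ | nval p α ≤ x} = _
  rw [Nat.card_coe_set_eq, Set.ncard_eq_toFinset_card _ hfin]

lemma mB_eq {x : ℝ} (hfin : {α : ℕ →₀ ℕ | nval p α ≤ x}.Finite) :
    mB p x = ∑ α ∈ hfin.toFinset, muB α / nval p α := by
  rw [mB]
  erw [tsum_subtype {α : ℕ →₀ ℕ | nval p α ≤ x} (fun α => muB α / nval p α)]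
  rw [tsum_eq_sum (s := hfin.toFinset) (f := fun α => Set.indicator _ (fun α => muB α / nval p α) α)
    (fun α hα => Set.indicator_of_notMem (by simpa using hα) _)]
  exact Finset.sum_congr rfl fun α hα => Set.indicator_of_mem (by simpa using hα) _

end aux

theorem stmt_13 (p : ℕ → ℝ) (hmono : Monotone p) (hp1 : 1 < p 0)
    (hptop : Tendsto p atTop atTop)
    (a : ℝ) (ha : 0 ≤ a)
    (hN : Tendsto (fun x : ℝ => (Ncount p x : ℝ) / x) atTop (𝓝 a)) :
    ∀ c : ℝ, 1 ≤ c → ∀ ε : ℝ, 0 < ε → ∀ᶠ x : ℝ in atTop,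
      ∀ η ∈ Set.Icc (1:ℝ) c, |mB p (η * x) - mB p x| ≤ a * Real.log c + ε := by
  intro c hc ε hε
  set L := Real.log c with hLdef
  have hL0 : 0 ≤ L := Real.log_nonneg hc
  have hc0 : (0:ℝ) < c := lt_of_lt_of_le one_pos hc
  -- choice of M
  set M : ℕ := max 1 ⌈2 * a * c * L ^ 2 / ε⌉₊ with hMdef
  have hM1 : 1 ≤ M := le_max_left _ _
  have hM0 : (0:ℝ) < (M : ℝ) := by exact_mod_cast Nat.lt_of_lt_of_le Nat.zero_lt_one hM1
  have hMge : 2 * a * c * L ^ 2 / ε ≤ (M : ℝ) := by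
    refine le_trans (Nat.le_ceil _) ?_
    exact Nat.cast_le.2 (le_max_right 1 ⌈2 * a * c * L ^ 2 / ε⌉₊)
  have hMe : a * c * L ^ 2 / (M : ℝ) ≤ ε / 2 := by
    rw [div_le_div_iff₀ hM0 two_pos]
    have h := (div_le_iff₀ hε).1 hMge
    linarith
  -- the ratio r
  set r : ℝ := Real.exp (L / M) with hrdef
  have hr0 : 0 < r := Real.exp_pos _
  have hr1 : 1 ≤ r := Real.one_le_exp (div_nonneg hL0 hM0.le)
  have hrM : r ^ M = c := by
    rw [hrdef, ← Real.exp_nat_mul, mul_div_cancel₀ _ hM0.ne', hLdef, Real.exp_log hc0]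
  have hrc : r ≤ c := by
    calc r = r ^ 1 := (pow_one r).symm
    _ ≤ r ^ M := pow_le_pow_right₀ hr1 hM1
    _ = c := hrM
  have hexp : r - 1 ≤ (L / M) * r := by
    have h1 : 1 - L / M ≤ r⁻¹ := by
      have h := Real.add_one_le_exp (-(L / M))
      rwa [Real.exp_neg, neg_add_eq_sub, ← hrdef] at h
    have h2 : (1 - L / M) * r ≤ 1 := by
      calc (1 - L / M) * r ≤ r⁻¹ * r := mul_le_mul_of_nonneg_right h1 hr0.le
      _ = 1 := inv_mul_cancel₀ hr0.ne'
    nlinarith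
  have hkey : a * ((M : ℝ) * (r - 1)) ≤ a * L + ε / 2 := by
    have hstep1 : (M : ℝ) * (r - 1) ≤ L * r := by
      calc (M : ℝ) * (r - 1) ≤ (M : ℝ) * (L / M * r) :=
            mul_le_mul_of_nonneg_left hexp hM0.le
      _ = L * r := by field_simp
    have hstep2 : L * r ≤ L + L * (L / M) * c := by
      have ha1 : L * (r - 1) ≤ L * (L / M * r) := mul_le_mul_of_nonneg_left hexp hL0
      have ha2 : L * (L / M * r) ≤ L * (L / M * c) := by
        refine mul_le_mul_of_nonneg_left ?_ hL0
        exact mul_le_mul_of_nonneg_left hrc (div_nonneg hL0 hM0.le)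
      nlinarith
    have h3 : a * ((M : ℝ) * (r - 1)) ≤ a * (L * r) := mul_le_mul_of_nonneg_left hstep1 ha
    have h4 : a * (L * r) ≤ a * (L + L * (L / M) * c) := mul_le_mul_of_nonneg_left hstep2 ha
    have h5 : a * (L * (L / M) * c) ≤ ε / 2 := by
      have he : a * (L * (L / M) * c) = a * c * L ^ 2 / M := by ring
      rw [he]; exact hMe
    nlinarith
  -- finite sets
  have hfin : ∀ v : ℝ, {α : ℕ →₀ ℕ | nval p α ≤ v}.Finite := finite_S hmono hp1 hptop
  set S : ℝ → Finset (ℕ →₀ ℕ) := fun v => (hfin v).toFinset with hSdef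
  have hmemS : ∀ v (α : ℕ →₀ ℕ), α ∈ S v ↔ nval p α ≤ v := by
    intro v α; simp [hSdef, Set.Finite.mem_toFinset]
  have hSmono : ∀ {u v : ℝ}, u ≤ v → S u ⊆ S v := by
    intro u v huv α hα
    exact (hmemS v α).2 (le_trans ((hmemS u α).1 hα) huv)
  have hNc : ∀ v : ℝ, (Ncount p v : ℝ) = ((S v).card : ℝ) := by
    intro v
    show (Ncount p v : ℝ) = (((hfin v).toFinset.card : ℕ) : ℝ)
    exact_mod_cast Ncount_eq (hfin v)
  have hmBeq : ∀ v : ℝ, mB p v = ∑ α ∈ S v, muB α / nval p α := fun v => mB_eq (hfin v)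
  set H : ℝ → ℝ := fun v => ∑ α ∈ S v, 1 / nval p α with hHdef
  have hnval_pos : ∀ α : ℕ →₀ ℕ, 0 < nval p α :=
    fun α => lt_of_lt_of_le one_pos (one_le_nval hmono hp1 α)
  have hmu : ∀ α : ℕ →₀ ℕ, |muB α| ≤ 1 := by
    intro α
    rw [muB]
    split
    · rw [abs_pow, abs_neg, abs_one, one_pow]
    · simp
  have hdiff : ∀ u v : ℝ, u ≤ v → H v - H u = ∑ α ∈ S v \ S u, 1 / nval p α := by
    intro u v huv
    show (∑ α ∈ S v, 1 / nval p α) - (∑ α ∈ S u, 1 / nval p α) = _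
    rw [← Finset.sum_sdiff (hSmono huv) (f := fun α => 1 / nval p α)]
    ring
  have habs : ∀ u v : ℝ, u ≤ v → |mB p v - mB p u| ≤ H v - H u := by
    intro u v huv
    rw [hmBeq u, hmBeq v, ← Finset.sum_sdiff (hSmono huv) (f := fun α => muB α / nval p α),
      add_sub_cancel_right, hdiff u v huv]
    refine le_trans (Finset.abs_sum_le_sum_abs _ _) (Finset.sum_le_sum fun α _ => ?_)
    rw [abs_div, abs_of_pos (hnval_pos α)]
    gcongr
    · exact (hnval_pos α).le
    · exact hmu α
  have hHmono : ∀ {u v : ℝ}, u ≤ v → H u ≤ H v := by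
    intro u v huv
    exact Finset.sum_le_sum_of_subset_of_nonneg (hSmono huv)
      (fun α _ _ => (one_div_pos.2 (hnval_pos α)).le)
  have hHN : ∀ u v : ℝ, 0 < u → u ≤ v → H v - H u ≤ ((Ncount p v : ℝ) - Ncount p u) / u := by
    intro u v hu huv
    rw [hdiff u v huv, hNc, hNc]
    calc ∑ α ∈ S v \ S u, 1 / nval p α ≤ ∑ _α ∈ S v \ S u, 1 / u := by
          refine Finset.sum_le_sum fun α hα => ?_
          have h1 : ¬ nval p α ≤ u := fun h => (Finset.mem_sdiff.1 hα).2 ((hmemS u α).2 h)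
          exact one_div_le_one_div_of_le hu (le_of_lt (lt_of_not_ge h1))
    _ = ((S v \ S u).card : ℝ) * (1 / u) := by rw [Finset.sum_const, nsmul_eq_mul]
    _ = (((S v).card : ℝ) - ((S u).card : ℝ)) / u := by
          rw [Finset.card_sdiff_of_subset (hSmono huv), Nat.cast_sub (Finset.card_le_card (hSmono huv))]
          ring
  -- the comparison function
  set F : ℝ → ℝ := fun x => ∑ i ∈ Finset.range M,
    ((Ncount p (x * r ^ (i + 1)) : ℝ) - (Ncount p (x * r ^ i) : ℝ)) / (x * r ^ i) with hFdef
  have htel : ∀ x : ℝ, 0 < x → H (c * x) - H x ≤ F x := by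
    intro x hx
    have h0 : H (c * x) - H x = ∑ i ∈ Finset.range M, (H (x * r ^ (i + 1)) - H (x * r ^ i)) := by
      rw [Finset.sum_range_sub (f := fun i => H (x * r ^ i)), pow_zero, mul_one, hrM, mul_comm]
    rw [h0, hFdef]
    refine Finset.sum_le_sum fun i _ => ?_
    refine hHN _ _ (by positivity) ?_
    have : r ^ i ≤ r ^ (i + 1) := pow_le_pow_right₀ hr1 (Nat.le_succ i)
    exact mul_le_mul_of_nonneg_left this hx.le
  -- limit of F
  have hFt : Tendsto F atTop (𝓝 ((M : ℝ) * (r * a - a))) := by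
    have haux : Tendsto (fun x : ℝ => ∑ i ∈ Finset.range M,
        (r * ((Ncount p (x * r ^ (i + 1)) : ℝ) / (x * r ^ (i + 1)))
          - (Ncount p (x * r ^ i) : ℝ) / (x * r ^ i))) atTop
        (𝓝 (∑ _i ∈ Finset.range M, (r * a - a))) := by
      refine tendsto_finset_sum _ fun i _ => ?_
      have h1 : Tendsto (fun x : ℝ => x * r ^ (i + 1)) atTop atTop :=
        Tendsto.atTop_mul_const (by positivity) tendsto_id
      have h2 : Tendsto (fun x : ℝ => x * r ^ i) atTop atTop :=
        Tendsto.atTop_mul_const (by positivity) tendsto_id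
      exact ((hN.comp h1).const_mul r).sub (hN.comp h2)
    rw [Finset.sum_const, Finset.card_range, nsmul_eq_mul] at haux
    refine haux.congr' ?_
    filter_upwards [eventually_gt_atTop (0:ℝ)] with x hx
    rw [hFdef]
    refine Finset.sum_congr rfl fun i _ => ?_
    have hxr : x * r ^ i ≠ 0 := by positivity
    have hxr1 : x * r ^ (i + 1) ≠ 0 := by positivity
    field_simp
    ring
  have hlim : (M : ℝ) * (r * a - a) < a * L + ε := by
    have he : (M : ℝ) * (r * a - a) = a * ((M : ℝ) * (r - 1)) := by ring
    rw [he]; linarith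
  filter_upwards [hFt.eventually_lt_const hlim, eventually_gt_atTop (0:ℝ)] with x hFx hx η hη
  have h1 : x ≤ η * x := le_mul_of_one_le_left hx.le hη.1
  have h2 : η * x ≤ c * x := mul_le_mul_of_nonneg_right hη.2 hx.le
  calc |mB p (η * x) - mB p x| ≤ H (η * x) - H x := habs _ _ h1
  _ ≤ H (c * x) - H x := by linarith [hHmono h2]
  _ ≤ F x := htel x hx
  _ ≤ a * L + ε := hFx.le
end

section
/- Let Π(x) = ∫_2^x (1 + cos(log u))/log u du for x ≥ 2. Then Π(x) = (x/log x)(1 + (√2/2) cos(log x − π/4)) + O(x/log² x) as x → ∞; that is, there exist constants C > 0 and x₀ ≥ 2 such that |Π(x) − (x/log x)(1 + (√2/2) cos(log x − π/4))| ≤ C x/log² x for all x ≥ x₀. -/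
open Filter MeasureTheory Set Topology
open scoped Classical

noncomputable def fB (u : ℝ) : ℝ := (1 + Real.cos (Real.log u)) / Real.log u
noncomputable def GB (u : ℝ) : ℝ :=
  u * (1 + (Real.cos (Real.log u) + Real.sin (Real.log u)) / 2) / Real.log u
noncomputable def hB (u : ℝ) : ℝ :=
  (1 + (Real.cos (Real.log u) + Real.sin (Real.log u)) / 2) / (Real.log u) ^ 2
noncomputable def HB (u : ℝ) : ℝ := 5 * u / (Real.log u) ^ 2
noncomputable def DB (u : ℝ) : ℝ := 5 / (Real.log u) ^ 2 - 10 / (Real.log u) ^ 3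

lemma log_ne_zero_of_one_lt {u : ℝ} (hu : 1 < u) : Real.log u ≠ 0 :=
  (Real.log_pos hu).ne'

lemma GB_deriv {u : ℝ} (hu : 1 < u) : HasDerivAt GB (fB u - hB u) u := by
  have hupos : (0:ℝ) < u := lt_trans one_pos hu
  have hlog : Real.log u ≠ 0 := log_ne_zero_of_one_lt hu
  have hl : HasDerivAt Real.log u⁻¹ u := Real.hasDerivAt_log hupos.ne'
  have hc : HasDerivAt (fun v : ℝ => Real.cos (Real.log v)) (-Real.sin (Real.log u) * u⁻¹) u :=
    (Real.hasDerivAt_cos _).comp u hl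
  have hs : HasDerivAt (fun v : ℝ => Real.sin (Real.log v)) (Real.cos (Real.log u) * u⁻¹) u :=
    (Real.hasDerivAt_sin _).comp u hl
  have h1 : HasDerivAt (fun v : ℝ => 1 + (Real.cos (Real.log v) + Real.sin (Real.log v)) / 2)
      ((-Real.sin (Real.log u) * u⁻¹ + Real.cos (Real.log u) * u⁻¹) / 2) u :=
    ((hc.add hs).div_const 2).const_add 1
  have hg : HasDerivAt
      (fun v : ℝ => v * (1 + (Real.cos (Real.log v) + Real.sin (Real.log v)) / 2))
      (1 * (1 + (Real.cos (Real.log u) + Real.sin (Real.log u)) / 2) +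
        u * ((-Real.sin (Real.log u) * u⁻¹ + Real.cos (Real.log u) * u⁻¹) / 2)) u :=
    (hasDerivAt_id u).mul h1
  have := hg.div hl hlog
  convert this using 1
  · rfl
  · rfl
  · rfl
  unfold fB hB
  field_simp
  ring

lemma HB_deriv {u : ℝ} (hu : 1 < u) : HasDerivAt HB (DB u) u := by
  have hupos : (0:ℝ) < u := lt_trans one_pos hu
  have hlog : Real.log u ≠ 0 := log_ne_zero_of_one_lt hu
  have hl : HasDerivAt Real.log u⁻¹ u := Real.hasDerivAt_log hupos.ne'
  have hsq : HasDerivAt (fun v : ℝ => (Real.log v) ^ 2)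
      (2 * (Real.log u) ^ 1 * u⁻¹) u := by
    simpa using hl.fun_pow 2
  have hnum : HasDerivAt (fun v : ℝ => 5 * v) (5 : ℝ) u := by
    simpa using (hasDerivAt_id u).const_mul (5:ℝ)
  have := hnum.div hsq (pow_ne_zero 2 hlog)
  convert this using 1
  · rfl
  · rfl
  · rfl
  unfold DB
  field_simp
  ring

lemma logc : ContinuousOn Real.log {u : ℝ | 1 < u} :=
  ContinuousOn.log continuousOn_id (fun u hu => ne_of_gt (lt_trans one_pos hu))

lemma fB_contOn : ContinuousOn fB {u : ℝ | 1 < u} :=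
  ContinuousOn.div (continuousOn_const.add (Real.continuous_cos.comp_continuousOn logc))
    logc (fun u hu => log_ne_zero_of_one_lt hu)

lemma hB_contOn : ContinuousOn hB {u : ℝ | 1 < u} :=
  ContinuousOn.div
    (continuousOn_const.add (((Real.continuous_cos.comp_continuousOn logc).add
      (Real.continuous_sin.comp_continuousOn logc)).div_const 2))
    (logc.pow 2) (fun u hu => pow_ne_zero 2 (log_ne_zero_of_one_lt hu))

lemma DB_contOn : ContinuousOn DB {u : ℝ | 1 < u} :=
  ContinuousOn.sub
    (ContinuousOn.div continuousOn_const (logc.pow 2)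
      (fun u hu => pow_ne_zero 2 (log_ne_zero_of_one_lt hu)))
    (ContinuousOn.div continuousOn_const (logc.pow 3)
      (fun u hu => pow_ne_zero 3 (log_ne_zero_of_one_lt hu)))

lemma trig_key (θ : ℝ) :
    Real.sqrt 2 / 2 * Real.cos (θ - Real.pi / 4) = (Real.cos θ + Real.sin θ) / 2 := by
  rw [Real.cos_sub, Real.cos_pi_div_four, Real.sin_pi_div_four]
  have h2 : Real.sqrt 2 * Real.sqrt 2 = 2 := Real.mul_self_sqrt (by norm_num)
  have : Real.sqrt 2 / 2 * (Real.cos θ * (Real.sqrt 2 / 2) + Real.sin θ * (Real.sqrt 2 / 2))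
      = Real.sqrt 2 * Real.sqrt 2 * (Real.cos θ + Real.sin θ) / 4 := by ring
  rw [this, h2]; ring

theorem stmt_15 :
    ∃ C : ℝ, 0 < C ∧ ∃ x₀ : ℝ, 2 ≤ x₀ ∧ ∀ x : ℝ, x₀ ≤ x →
      |(∫ u in (2:ℝ)..x, (1 + Real.cos (Real.log u)) / Real.log u) -
        x / Real.log x *
          (1 + Real.sqrt 2 / 2 * Real.cos (Real.log x - Real.pi / 4))| ≤
        C * x / (Real.log x) ^ 2 := by
  set x₀ : ℝ := Real.exp 4 with hx₀def
  have hx₀5 : (5:ℝ) ≤ x₀ := by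
    have := Real.add_one_le_exp (4:ℝ); linarith
  have hx₀2 : (2:ℝ) ≤ x₀ := by linarith
  have hx₀1 : (1:ℝ) < x₀ := by linarith
  set C₀ : ℝ := ∫ u in (2:ℝ)..x₀, fB u with hC₀def
  set A : ℝ := |C₀ - GB x₀| with hAdef
  refine ⟨5 + 4 * A, by positivity, x₀, hx₀2, ?_⟩
  intro x hx
  have hx1 : (1:ℝ) < x := lt_of_lt_of_le hx₀1 hx
  have hxpos : (0:ℝ) < x := lt_trans one_pos hx1
  have hlog4 : (4:ℝ) ≤ Real.log x := by
    have : Real.log x₀ ≤ Real.log x := Real.log_le_log (by positivity) hx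
    rwa [hx₀def, Real.log_exp] at this
  have hlogpos : (0:ℝ) < Real.log x := by linarith
  -- subsets for continuity
  have hsub2 : Set.uIcc (2:ℝ) x₀ ⊆ {u : ℝ | 1 < u} := by
    rw [Set.uIcc_of_le hx₀2]
    intro u hu; exact lt_of_lt_of_le one_lt_two hu.1
  have hsubx : Set.uIcc x₀ x ⊆ {u : ℝ | 1 < u} := by
    rw [Set.uIcc_of_le hx]
    intro u hu; exact lt_of_lt_of_le hx₀1 hu.1
  have hint_f2 : IntervalIntegrable fB volume 2 x₀ :=
    (fB_contOn.mono hsub2).intervalIntegrable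
  have hint_fx : IntervalIntegrable fB volume x₀ x :=
    (fB_contOn.mono hsubx).intervalIntegrable
  have hint_h : IntervalIntegrable hB volume x₀ x :=
    (hB_contOn.mono hsubx).intervalIntegrable
  have hint_D : IntervalIntegrable DB volume x₀ x :=
    (DB_contOn.mono hsubx).intervalIntegrable
  -- FTC
  have hFTC1 : ∫ u in x₀..x, (fB u - hB u) = GB x - GB x₀ :=
    intervalIntegral.integral_eq_sub_of_hasDerivAt
      (fun u hu => GB_deriv (hsubx hu)) (hint_fx.sub hint_h)
  have hFTC2 : ∫ u in x₀..x, DB u = HB x - HB x₀ :=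
    intervalIntegral.integral_eq_sub_of_hasDerivAt
      (fun u hu => HB_deriv (hsubx hu)) hint_D
  have hsplit : (∫ u in (2:ℝ)..x, fB u) = C₀ + ∫ u in x₀..x, fB u :=
    (intervalIntegral.integral_add_adjacent_intervals hint_f2 hint_fx).symm
  have hfh : (∫ u in x₀..x, fB u) = (GB x - GB x₀) + ∫ u in x₀..x, hB u := by
    have := intervalIntegral.integral_sub hint_fx hint_h
    rw [hFTC1] at this; linarith
  -- bound on the remainder integral
  have hpt : ∀ u ∈ Set.Icc x₀ x, |hB u| ≤ DB u := by
    intro u hu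
    have hL : (4:ℝ) ≤ Real.log u := by
      have : Real.log x₀ ≤ Real.log u := Real.log_le_log (by positivity) hu.1
      rwa [hx₀def, Real.log_exp] at this
    have hLpos : (0:ℝ) < Real.log u := by linarith
    have hnum : |1 + (Real.cos (Real.log u) + Real.sin (Real.log u)) / 2| ≤ 2 := by
      rw [abs_le]
      constructor <;>
        nlinarith [Real.neg_one_le_cos (Real.log u), Real.cos_le_one (Real.log u),
          Real.neg_one_le_sin (Real.log u), Real.sin_le_one (Real.log u)]
    have h1 : |hB u| ≤ 2 / (Real.log u) ^ 2 := by
      unfold hB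
      rw [abs_div, abs_of_pos (pow_pos hLpos 2)]
      gcongr
    have h2 : 2 / (Real.log u) ^ 2 ≤ DB u := by
      have e : DB u - 2 / (Real.log u) ^ 2 = (3 * Real.log u - 10) / (Real.log u) ^ 3 := by
        unfold DB; field_simp; ring
      have h0 : 0 ≤ (3 * Real.log u - 10) / (Real.log u) ^ 3 :=
        div_nonneg (by linarith) (pow_pos hLpos 3).le
      linarith
    exact h1.trans h2
  have habs : |∫ u in x₀..x, hB u| ≤ HB x - HB x₀ := by
    calc |∫ u in x₀..x, hB u| ≤ ∫ u in x₀..x, |hB u| :=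
          intervalIntegral.abs_integral_le_integral_abs hx
      _ ≤ ∫ u in x₀..x, DB u :=
          intervalIntegral.integral_mono_on hx hint_h.abs hint_D hpt
      _ = HB x - HB x₀ := hFTC2
  have hHx₀ : 0 ≤ HB x₀ := by
    unfold HB
    positivity
  have hGmain : x / Real.log x *
      (1 + Real.sqrt 2 / 2 * Real.cos (Real.log x - Real.pi / 4)) = GB x := by
    rw [trig_key]; unfold GB; ring
  have hfB : (∫ u in (2:ℝ)..x, (1 + Real.cos (Real.log u)) / Real.log u)
      = ∫ u in (2:ℝ)..x, fB u := rfl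
  rw [hfB, hGmain, hsplit, hfh]
  have heq : C₀ + (GB x - GB x₀ + ∫ u in x₀..x, hB u) - GB x
      = (C₀ - GB x₀) + ∫ u in x₀..x, hB u := by ring
  rw [heq]
  have h3 : |(C₀ - GB x₀) + ∫ u in x₀..x, hB u| ≤ A + (HB x - HB x₀) := by
    calc |(C₀ - GB x₀) + ∫ u in x₀..x, hB u|
        ≤ |C₀ - GB x₀| + |∫ u in x₀..x, hB u| := abs_add_le _ _
      _ ≤ A + (HB x - HB x₀) := by rw [hAdef]; exact add_le_add le_rfl habs
  have hsqrt : Real.log x ≤ 2 * Real.sqrt x := by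
    have h1 : Real.log x = 2 * Real.log (Real.sqrt x) := by
      rw [Real.log_sqrt hxpos.le]; ring
    have h2 : Real.log (Real.sqrt x) ≤ Real.sqrt x - 1 :=
      Real.log_le_sub_one_of_pos (Real.sqrt_pos.2 hxpos)
    nlinarith [Real.sqrt_nonneg x]
  have hL2 : (Real.log x) ^ 2 ≤ 4 * x := by
    calc (Real.log x) ^ 2 ≤ (2 * Real.sqrt x) ^ 2 :=
          pow_le_pow_left₀ (by linarith) hsqrt 2
      _ = 4 * x := by rw [mul_pow, Real.sq_sqrt hxpos.le]; norm_num
  have hAnn : 0 ≤ A := abs_nonneg _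
  have hA4 : A * (Real.log x) ^ 2 ≤ 4 * A * x := by nlinarith
  have hfin : A + (HB x - HB x₀) ≤ (5 + 4 * A) * x / (Real.log x) ^ 2 := by
    have hAle : A ≤ 4 * A * x / (Real.log x) ^ 2 := by
      rw [le_div_iff₀ (by positivity)]; exact hA4
    have hHx : HB x = 5 * x / (Real.log x) ^ 2 := rfl
    have hrw : (5 + 4 * A) * x / (Real.log x) ^ 2
        = 5 * x / (Real.log x) ^ 2 + 4 * A * x / (Real.log x) ^ 2 := by ring
    rw [hrw]; linarith [hHx ▸ le_refl (HB x)]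
  calc |(C₀ - GB x₀) + ∫ u in x₀..x, hB u| ≤ A + (HB x - HB x₀) := h3
    _ ≤ (5 + 4 * A) * x / (Real.log x) ^ 2 := hfin
end

section
/- Let Π(x) = ∫_2^x (1 + cos(log u))/log u du for x ≥ 2. Then ∫_2^∞ |Π(x) − x/log x| x^{−2} dx = ∞. -/
open Filter MeasureTheory Set Topology
open scoped Classical

noncomputable def faux (u : ℝ) : ℝ := (1 + Real.cos (Real.log u)) / Real.log u

noncomputable def gaux (u : ℝ) : ℝ :=
  ((Real.cos (Real.log u) + Real.sin (Real.log u)) / 2 + 1) / (Real.log u) ^ 2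

noncomputable def Haux (u : ℝ) : ℝ :=
  (u * (Real.cos (Real.log u) + Real.sin (Real.log u)) / 2 + u) / Real.log u

lemma haux_deriv {u : ℝ} (hu : 1 < u) : HasDerivAt Haux (faux u - gaux u) u := by
  have hu0 : u ≠ 0 := by positivity
  have hL0 : 0 < Real.log u := Real.log_pos hu
  have hL : Real.log u ≠ 0 := ne_of_gt hL0
  have hlog : HasDerivAt Real.log u⁻¹ u := Real.hasDerivAt_log hu0
  have hcos : HasDerivAt (fun v => Real.cos (Real.log v)) (-Real.sin (Real.log u) * u⁻¹) u :=
    hlog.cos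
  have hsin : HasDerivAt (fun v => Real.sin (Real.log v)) (Real.cos (Real.log u) * u⁻¹) u :=
    hlog.sin
  have hN : HasDerivAt (fun v => v * (Real.cos (Real.log v) + Real.sin (Real.log v)) / 2 + v)
      ((1 * (Real.cos (Real.log u) + Real.sin (Real.log u)) +
        u * (-Real.sin (Real.log u) * u⁻¹ + Real.cos (Real.log u) * u⁻¹)) / 2 + 1) u :=
    (((hasDerivAt_id u).mul (hcos.add hsin)).div_const 2).add (hasDerivAt_id u)
  have h := hN.div hlog hL
  refine h.congr_deriv ?_
  unfold faux gaux
  field_simp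
  ring

lemma faux_int_ge {x : ℝ} (hx : 2 ≤ x) :
    Haux x - Haux 2 ≤ ∫ u in (2:ℝ)..x, faux u := by
  have huIcc : uIcc (2:ℝ) x = Icc 2 x := uIcc_of_le hx
  have hmem : ∀ u ∈ uIcc (2:ℝ) x, 1 < u := by
    intro u hu; rw [huIcc] at hu; linarith [hu.1]
  have hlogC : ContinuousOn Real.log (uIcc (2:ℝ) x) :=
    Real.continuousOn_log.mono (fun u hu => by simp [ne_of_gt (lt_trans one_pos (hmem u hu))])
  have hlogne : ∀ u ∈ uIcc (2:ℝ) x, Real.log u ≠ 0 :=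
    fun u hu => ne_of_gt (Real.log_pos (hmem u hu))
  have hcf : ContinuousOn faux (uIcc (2:ℝ) x) := by
    apply ContinuousOn.div
    · exact (continuousOn_const.add (Real.continuous_cos.comp_continuousOn hlogC))
    · exact hlogC
    · exact hlogne
  have hcg : ContinuousOn gaux (uIcc (2:ℝ) x) := by
    apply ContinuousOn.div
    · exact ((Real.continuous_cos.comp_continuousOn hlogC).add
        (Real.continuous_sin.comp_continuousOn hlogC)).div_const 2 |>.add continuousOn_const
    · exact hlogC.pow 2
    · exact fun u hu => pow_ne_zero 2 (hlogne u hu)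
  have hint : ∫ u in (2:ℝ)..x, (faux u - gaux u) = Haux x - Haux 2 :=
    intervalIntegral.integral_eq_sub_of_hasDerivAt (fun u hu => haux_deriv (hmem u hu))
      ((hcf.sub hcg).intervalIntegrable)
  rw [← hint]
  apply intervalIntegral.integral_mono_on hx ((hcf.sub hcg).intervalIntegrable)
    hcf.intervalIntegrable
  intro u hu
  have hg : 0 ≤ gaux u := by
    unfold gaux
    apply div_nonneg _ (sq_nonneg _)
    nlinarith [Real.neg_one_le_cos (Real.log u), Real.neg_one_le_sin (Real.log u)]
  simp only [Pi.sub_apply]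
  linarith

lemma cos_add_sin_ge {t : ℝ} {m : ℕ} (h1 : 2*m*Real.pi ≤ t) (h2 : t ≤ 2*m*Real.pi + Real.pi/2) :
    1 ≤ Real.cos t + Real.sin t := by
  have hpi := Real.pi_pos
  set s := t - (m:ℤ) * (2*Real.pi) with hs
  have hc : Real.cos t = Real.cos s := (Real.cos_sub_int_mul_two_pi t m).symm
  have hsn : Real.sin t = Real.sin s := (Real.sin_sub_int_mul_two_pi t m).symm
  have hs0 : 0 ≤ s := by push_cast [hs]; linarith
  have hs1 : s ≤ Real.pi/2 := by push_cast [hs]; linarith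
  have hcn : 0 ≤ Real.cos s := Real.cos_nonneg_of_mem_Icc ⟨by linarith, hs1⟩
  have hsn0 : 0 ≤ Real.sin s := Real.sin_nonneg_of_nonneg_of_le_pi hs0 (by linarith)
  have hc1 : Real.cos s ≤ 1 := Real.cos_le_one s
  have hs2 : Real.sin s ≤ 1 := Real.sin_le_one s
  have hpyth := Real.sin_sq_add_cos_sq s
  rw [hc, hsn]
  nlinarith
lemma pointwise_bound {m : ℕ} (hm : 2 ≤ m) {x : ℝ}
    (hx1 : Real.exp (2*m*Real.pi) ≤ x) (hx2 : x ≤ Real.exp (2*m*Real.pi + Real.pi/2)) :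
    1/(4*x*Real.log x) ≤ |(∫ u in (2:ℝ)..x, faux u) - x / Real.log x| / x^2 := by
  have hpi3 : 3 < Real.pi := Real.pi_gt_three
  have hpi : Real.pi < 3.15 := Real.pi_lt_d2
  have hm' : (2:ℝ) ≤ (m:ℝ) := by exact_mod_cast hm
  have ha12 : (12:ℝ) ≤ 2*m*Real.pi := by nlinarith
  have hx0 : (0:ℝ) < x := lt_of_lt_of_le (Real.exp_pos _) hx1
  have hL1 : 2*m*Real.pi ≤ Real.log x := by
    rw [← Real.log_exp (2*m*Real.pi)]; exact Real.log_le_log (Real.exp_pos _) hx1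
  have hL2 : Real.log x ≤ 2*m*Real.pi + Real.pi/2 := by
    rw [← Real.log_exp (2*m*Real.pi + Real.pi/2)]; exact Real.log_le_log hx0 hx2
  have hL12 : (12:ℝ) ≤ Real.log x := le_trans ha12 hL1
  have hL0 : (0:ℝ) < Real.log x := by linarith
  have hx24 : 24 * Real.log x ≤ x := by
    set t := Real.log x with ht
    have hxe : x = Real.exp t := (Real.exp_log hx0).symm
    have htay : t^3/6 ≤ Real.exp t := by
      have h := Real.sum_le_exp_of_nonneg (x := t) (by linarith) 4
      have hsum : (∑ i ∈ Finset.range 4, t ^ i / (i.factorial : ℝ)) =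
          1 + t + t^2/2 + t^3/6 := by
        norm_num [Finset.sum_range_succ, Nat.factorial]
      rw [hsum] at h
      nlinarith
    have h144 : 144 * t ≤ t^3 := by nlinarith [sq_nonneg t]
    rw [hxe]
    nlinarith
  have hx2' : (2:ℝ) ≤ x := by nlinarith
  have hcs : 1 ≤ Real.cos (Real.log x) + Real.sin (Real.log x) := cos_add_sin_ge hL1 hL2
  have hHx : 3*x/(2*Real.log x) ≤ Haux x := by
    unfold Haux
    rw [div_le_div_iff₀ (by linarith) hL0]
    nlinarith [mul_nonneg (mul_nonneg hx0.le hL0.le) (sub_nonneg.mpr hcs)]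
  have hH2 : Haux 2 ≤ 6 := by
    unfold Haux
    have hlog2 : (2:ℝ)/3 ≤ Real.log 2 := by
      have := Real.log_two_gt_d9; linarith
    rw [div_le_iff₀ (by linarith)]
    nlinarith [Real.cos_le_one (Real.log 2), Real.sin_le_one (Real.log 2)]
  have hF := faux_int_ge hx2'
  have h6 : 6 ≤ x/(4*Real.log x) := by
    rw [le_div_iff₀ (by positivity)]; linarith
  have hid : 3*x/(2*Real.log x) - x/Real.log x - x/(4*Real.log x) = x/(4*Real.log x) := by
    field_simp; ring
  have key : x/(4*Real.log x) ≤ (∫ u in (2:ℝ)..x, faux u) - x / Real.log x := by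
    linarith
  have habs : x/(4*Real.log x) ≤ |(∫ u in (2:ℝ)..x, faux u) - x / Real.log x| :=
    le_trans key (le_abs_self _)
  calc 1/(4*x*Real.log x) = (x/(4*Real.log x))/x^2 := by field_simp
    _ ≤ |(∫ u in (2:ℝ)..x, faux u) - x / Real.log x| / x^2 := by gcongr

theorem stmt_16 :
    ∫⁻ x in Set.Ici (2:ℝ),
      ENNReal.ofReal
        (|(∫ u in (2:ℝ)..x, (1 + Real.cos (Real.log u)) / Real.log u) - x / Real.log x| / x ^ 2)
      = ⊤ := by
  have hpi3 : 3 < Real.pi := Real.pi_gt_three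
  have hpi : Real.pi < 3.15 := Real.pi_lt_d2
  set F : ℝ → ENNReal := fun x => ENNReal.ofReal
      (|(∫ u in (2:ℝ)..x, (1 + Real.cos (Real.log u)) / Real.log u) - x / Real.log x| / x ^ 2)
    with hF
  set a : ℕ → ℝ := fun k => 2*((k:ℝ)+2)*Real.pi with ha
  set I : ℕ → Set ℝ := fun k => Icc (Real.exp (a k)) (Real.exp (a k + Real.pi/2)) with hI
  have hameq : ∀ k : ℕ, a k = 2*((k+2:ℕ):ℝ)*Real.pi := by intro k; push_cast [ha]; ring
  have ha12 : ∀ k : ℕ, (12:ℝ) ≤ a k := by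
    intro k
    have : (0:ℝ) ≤ (k:ℝ) := Nat.cast_nonneg k
    show (12:ℝ) ≤ 2*((k:ℝ)+2)*Real.pi
    nlinarith
  have hmeas : ∀ k, MeasurableSet (I k) := fun k => measurableSet_Icc
  have hsub : (⋃ k, I k) ⊆ Ici (2:ℝ) := by
    rintro x hx
    simp only [mem_iUnion] at hx
    obtain ⟨k, hk⟩ := hx
    have h2 : (2:ℝ) ≤ Real.exp (a k) := by
      have := Real.add_one_le_exp (a k)
      have := ha12 k
      linarith
    exact le_trans h2 hk.1
  have hdisj : Pairwise (Function.onFun Disjoint I) := by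
    have key : ∀ k l : ℕ, k < l → Disjoint (I k) (I l) := by
      intro k l hkl
      rw [Set.disjoint_left]
      rintro x ⟨_, hx2⟩ ⟨hx3, _⟩
      have hle : Real.exp (a l) ≤ Real.exp (a k + Real.pi/2) := le_trans hx3 hx2
      rw [Real.exp_le_exp] at hle
      have : (k:ℝ) + 1 ≤ (l:ℝ) := by exact_mod_cast hkl
      rw [ha] at hle
      simp only at hle
      nlinarith
    intro k l hne
    rcases hne.lt_or_gt with h | h
    · exact key k l h
    · exact (key l k h).symm
  have hpt : ∀ k : ℕ, ∀ x ∈ I k,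
      ENNReal.ofReal (1/(4*Real.exp (a k + Real.pi/2)*(a k + Real.pi/2))) ≤ F x := by
    intro k x hx
    obtain ⟨hx1, hx2⟩ := hx
    have hm : 2 ≤ k + 2 := by omega
    have hb := pointwise_bound hm (x := x) (by rw [← hameq k]; exact hx1)
      (by rw [← hameq k]; exact hx2)
    have hx0 : (0:ℝ) < x := lt_of_lt_of_le (Real.exp_pos _) hx1
    have hL1 : a k ≤ Real.log x := by
      rw [← Real.log_exp (a k)]; exact Real.log_le_log (Real.exp_pos _) hx1
    have hL2 : Real.log x ≤ a k + Real.pi/2 := by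
      rw [← Real.log_exp (a k + Real.pi/2)]; exact Real.log_le_log hx0 hx2
    have hL0 : (0:ℝ) < Real.log x := by linarith [ha12 k]
    have hmono : 1/(4*Real.exp (a k + Real.pi/2)*(a k + Real.pi/2)) ≤ 1/(4*x*Real.log x) := by
      apply one_div_le_one_div_of_le (by positivity)
      have hak : (0:ℝ) < a k + Real.pi/2 := by linarith [ha12 k]
      nlinarith [mul_le_mul hx2 hL2 hL0.le (Real.exp_pos _).le]
    apply ENNReal.ofReal_le_ofReal
    calc 1/(4*Real.exp (a k + Real.pi/2)*(a k + Real.pi/2)) ≤ 1/(4*x*Real.log x) := hmono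
      _ ≤ _ := hb
  have h2 : ∀ k : ℕ, ENNReal.ofReal (1/(80*((k:ℝ)+2))) ≤ ∫⁻ x in I k, F x := by
    intro k
    set c := 1/(4*Real.exp (a k + Real.pi/2)*(a k + Real.pi/2)) with hc
    have hstep : ENNReal.ofReal (1/(80*((k:ℝ)+2))) ≤ ENNReal.ofReal c * volume (I k) := by
      rw [hI]
      simp only [Real.volume_Icc]
      rw [← ENNReal.ofReal_mul (by rw [hc]; positivity)]
      apply ENNReal.ofReal_le_ofReal
      have hE : (0:ℝ) < Real.exp (a k) := Real.exp_pos _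
      have hq : (2:ℝ) ≤ Real.exp (Real.pi/2) := by
        have h1 : (1:ℝ) ≤ Real.pi/2 := by linarith
        calc (2:ℝ) = 1 + 1 := by norm_num
          _ ≤ Real.pi/2 + 1 := by linarith
          _ ≤ Real.exp (Real.pi/2) := by linarith [Real.add_one_le_exp (Real.pi/2)]
      have hEq : Real.exp (a k + Real.pi/2) = Real.exp (a k) * Real.exp (Real.pi/2) :=
        Real.exp_add _ _
      have hak : (0:ℝ) < a k + Real.pi/2 := by linarith [ha12 k]
      have hvol : Real.exp (a k) * Real.exp (Real.pi/2) / 2 ≤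
          Real.exp (a k + Real.pi/2) - Real.exp (a k) := by
        rw [hEq]; nlinarith
      rw [hc]
      have hkr : (0:ℝ) ≤ (k:ℝ) := Nat.cast_nonneg k
      calc 1/(80*((k:ℝ)+2))
          ≤ 1/(8*(a k + Real.pi/2)) := by
            apply one_div_le_one_div_of_le (by positivity)
            rw [ha]; nlinarith
        _ = (Real.exp (a k) * Real.exp (Real.pi/2) / 2) /
            (4*Real.exp (a k + Real.pi/2)*(a k + Real.pi/2)) := by
            rw [hEq]; field_simp; ring
        _ ≤ (Real.exp (a k + Real.pi/2) - Real.exp (a k)) /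
            (4*Real.exp (a k + Real.pi/2)*(a k + Real.pi/2)) := by
            gcongr
        _ = 1/(4*Real.exp (a k + Real.pi/2)*(a k + Real.pi/2)) *
            (Real.exp (a k + Real.pi/2) - Real.exp (a k)) := by ring
    refine le_trans hstep ?_
    rw [← setLIntegral_const (I k) (ENNReal.ofReal c)]
    apply lintegral_mono_ae
    rw [ae_restrict_iff' (hmeas k)]
    exact ae_of_all _ (hpt k)
  have htop : (∑' k:ℕ, ENNReal.ofReal (1/(80*((k:ℝ)+2)))) = ⊤ := by
    by_contra h
    have hsummable := ENNReal.summable_toReal h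
    have heq : (fun k:ℕ => (ENNReal.ofReal (1/(80*((k:ℝ)+2)))).toReal) =
        fun k:ℕ => 1/(80*((k:ℝ)+2)) := by
      funext k
      rw [ENNReal.toReal_ofReal (by positivity)]
    rw [heq] at hsummable
    have hs2 : Summable (fun k:ℕ => 1/(((k:ℝ)+2))) := by
      have h80 := hsummable.mul_left 80
      refine h80.congr (fun k => ?_)
      field_simp
    have hs3 : Summable (fun n:ℕ => 1/((n:ℝ))) := by
      rw [← summable_nat_add_iff 2]
      refine hs2.congr (fun k => ?_)
      push_cast
      ring
    exact Real.not_summable_one_div_natCast hs3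
  rw [eq_top_iff]
  calc (⊤:ENNReal) = ∑' k:ℕ, ENNReal.ofReal (1/(80*((k:ℝ)+2))) := htop.symm
    _ ≤ ∑' k:ℕ, ∫⁻ x in I k, F x := ENNReal.tsum_le_tsum h2
    _ = ∫⁻ x in ⋃ k, I k, F x := (lintegral_iUnion hmeas hdisj F).symm
    _ ≤ ∫⁻ x in Set.Ici (2:ℝ), F x := lintegral_mono_set hsub
end

section
/- For every s ∈ ℂ with Re s > 1, ∫_1^∞ x^{−s} (1 − 1/x)/log x dx = Log(s/(s − 1)); that is, the Mellin–Stieltjes transform of Π_0 equals Log(s/(s−1)) on the half-plane Re s > 1. -/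
open Filter MeasureTheory Set Topology
open scoped Classical

lemma SectPrf_aux_inner (s : ℂ) {x : ℝ} (hx : 1 < x) :
    ∫ t in Ioc (0:ℝ) 1, (x:ℂ) ^ (-(s + t)) =
      (x:ℂ) ^ (-s) * (((1 - 1/x) / Real.log x : ℝ) : ℂ) := by
  have hx0 : (0:ℝ) < x := lt_trans one_pos hx
  have hL : 0 < Real.log x := Real.log_pos hx
  have hxC : (x:ℂ) ≠ 0 := by exact_mod_cast hx0.ne'
  have hcne : ((-(Real.log x) : ℝ) : ℂ) ≠ 0 := by
    simpa using hL.ne'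
  have key : ∀ t : ℝ, (x:ℂ) ^ (-(s + (t:ℂ))) =
      (x:ℂ) ^ (-s) * Complex.exp (((-(Real.log x) : ℝ) : ℂ) * t) := by
    intro t
    rw [show -(s + (t:ℂ)) = -s + (-(t:ℂ)) by ring, Complex.cpow_add _ _ hxC]
    congr 1
    rw [Complex.cpow_def_of_ne_zero hxC, ← Complex.ofReal_log hx0.le]
    push_cast
    ring_nf
  rw [← intervalIntegral.integral_of_le zero_le_one]
  simp_rw [key]
  rw [intervalIntegral.integral_const_mul,
    integral_exp_mul_complex hcne]
  congr 1
  rw [Complex.ofReal_one, Complex.ofReal_zero, mul_zero, Complex.exp_zero, mul_one]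
  have hexp : Complex.exp (((-(Real.log x) : ℝ) : ℂ)) = ((x⁻¹ : ℝ) : ℂ) := by
    rw [← Complex.ofReal_exp]
    norm_cast
    rw [Real.exp_neg, Real.exp_log hx0]
  rw [hexp]
  push_cast
  field_simp
  ring

lemma SectPrf_aux_xint (s : ℂ) (hs : 1 < s.re) {t : ℝ} (ht : 0 ≤ t) :
    ∫ x in Ioi (1:ℝ), (x:ℂ) ^ (-(s + t)) = (s + t - 1)⁻¹ := by
  have hre : (-(s + (t:ℂ))).re < -1 := by
    simp [Complex.add_re]
    linarith
  have hne : s + (t:ℂ) - 1 ≠ 0 := by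
    intro h
    have := congrArg Complex.re h
    simp [Complex.add_re, Complex.sub_re] at this
    linarith
  rw [integral_Ioi_cpow_of_lt hre one_pos]
  rw [Complex.ofReal_one, Complex.one_cpow]
  rw [show -(s + (t:ℂ)) + 1 = -(s + t - 1) by ring]
  rw [div_neg, neg_div, neg_neg, one_div]

lemma SectPrf_aux_tint (s : ℂ) (hs : 1 < s.re) :
    ∫ t in Ioc (0:ℝ) 1, (s + (t:ℂ) - 1)⁻¹ = Complex.log (s / (s - 1)) := by
  have hmem : ∀ t : ℝ, t ∈ Set.Icc (0:ℝ) 1 → s - 1 + t ∈ Complex.slitPlane := by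
    intro t ht
    refine Or.inl ?_
    simp [Complex.add_re, Complex.sub_re]
    linarith [ht.1]
  have hd : ∀ t ∈ Set.uIcc (0:ℝ) 1, HasDerivAt (fun u : ℝ => Complex.log (s - 1 + u))
      (s - 1 + (t:ℂ))⁻¹ t := by
    intro t ht
    rw [Set.uIcc_of_le zero_le_one] at ht
    have h1 : HasDerivAt (fun w : ℂ => Complex.log (s - 1 + w)) (s - 1 + (t:ℂ))⁻¹ (t:ℂ) := by
      have h2 := (Complex.hasDerivAt_log (hmem t ht)).comp (t:ℂ)
        ((hasDerivAt_id (t:ℂ)).const_add (s - 1))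
      rw [mul_one] at h2
      exact h2
    simpa using h1.comp_ofReal
  have hcont : ContinuousOn (fun t : ℝ => (s - 1 + (t:ℂ))⁻¹) (Set.uIcc (0:ℝ) 1) := by
    apply ContinuousOn.inv₀
    · fun_prop
    · intro t ht
      rw [Set.uIcc_of_le zero_le_one] at ht
      intro h
      have := congrArg Complex.re h
      simp [Complex.add_re, Complex.sub_re] at this
      linarith [ht.1]
  have := intervalIntegral.integral_eq_sub_of_hasDerivAt hd
    (hcont.intervalIntegrable)
  rw [← intervalIntegral.integral_of_le zero_le_one]
  calc ∫ t in (0:ℝ)..1, (s + (t:ℂ) - 1)⁻¹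
      = ∫ t in (0:ℝ)..1, (s - 1 + (t:ℂ))⁻¹ := by
        congr 1; ext t; ring_nf
    _ = Complex.log (s - 1 + 1) - Complex.log (s - 1 + 0) := this
    _ = Complex.log s - Complex.log (s - 1) := by norm_num
    _ = Complex.log (s / (s - 1)) := by
        have hs0 : s ≠ 0 := by
          intro h; rw [h] at hs; simp at hs; linarith
        have hs1 : s - 1 ≠ 0 := by
          intro h
          have := congrArg Complex.re h
          simp [Complex.sub_re] at this
          linarith
        have hdiv : s / (s - 1) ≠ 0 := div_ne_zero hs0 hs1
        have harg1 : |Complex.arg (s / (s - 1))| < Real.pi / 2 := by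
          rw [Complex.abs_arg_lt_pi_div_two_iff]
          left
          rw [Complex.div_re]
          have hnsq : 0 < Complex.normSq (s - 1) := Complex.normSq_pos.mpr hs1
          have h1 : 0 < s.re * (s - 1).re := by
            simp [Complex.sub_re]; nlinarith
          have h2 : 0 ≤ s.im * (s - 1).im := by
            simp [Complex.sub_im]; nlinarith [sq_nonneg s.im]
          positivity
        have harg2 : |Complex.arg (s - 1)| < Real.pi / 2 := by
          rw [Complex.abs_arg_lt_pi_div_two_iff]
          left
          simp [Complex.sub_re]; linarith
        have : Complex.log (s / (s - 1) * (s - 1)) =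
            Complex.log (s / (s - 1)) + Complex.log (s - 1) := by
          apply Complex.log_mul hdiv hs1
          constructor
          · have := abs_lt.mp harg1
            have := abs_lt.mp harg2
            nlinarith [Real.pi_pos]
          · have h1 := abs_lt.mp harg1
            have h2 := abs_lt.mp harg2
            nlinarith [Real.pi_pos]
        rw [div_mul_cancel₀ _ hs1] at this
        rw [this]; ring

lemma SectPrf_aux_integrable (s : ℂ) (hs : 1 < s.re) :
    Integrable (Function.uncurry fun x t : ℝ => (x:ℂ) ^ (-(s + t)))
      ((volume.restrict (Ioi (1:ℝ))).prod (volume.restrict (Ioc (0:ℝ) 1))) := by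
  set μ := (volume.restrict (Ioi (1:ℝ))).prod (volume.restrict (Ioc (0:ℝ) 1)) with hμ
  have hμr : μ = (volume.prod volume).restrict ((Ioi (1:ℝ)) ×ˢ (Ioc (0:ℝ) 1)) := by
    rw [hμ, Measure.prod_restrict]
  have hmeasset : MeasurableSet ((Ioi (1:ℝ)) ×ˢ (Ioc (0:ℝ) 1)) :=
    measurableSet_Ioi.prod measurableSet_Ioc
  have hmeasF : Measurable (fun p : ℝ × ℝ =>
      Complex.exp (-(s + (p.2:ℂ)) * (Real.log p.1 : ℂ))) := by
    apply Complex.measurable_exp.comp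
    apply Measurable.mul
    · fun_prop
    · exact (Complex.measurable_ofReal.comp (Real.measurable_log.comp measurable_fst))
  have hae : ∀ᵐ p ∂μ, (fun p : ℝ × ℝ =>
      Complex.exp (-(s + (p.2:ℂ)) * (Real.log p.1 : ℂ))) p =
      Function.uncurry (fun x t : ℝ => (x:ℂ) ^ (-(s + t))) p := by
    rw [hμr]
    refine ae_restrict_of_forall_mem hmeasset ?_
    rintro ⟨x, t⟩ ⟨hx, ht⟩
    have hx0 : (0:ℝ) < x := lt_trans one_pos hx
    have hxC : (x:ℂ) ≠ 0 := by exact_mod_cast hx0.ne'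
    simp only [Function.uncurry]
    rw [Complex.cpow_def_of_ne_zero hxC, ← Complex.ofReal_log hx0.le, mul_comm]
  have hsm : AEStronglyMeasurable (Function.uncurry fun x t : ℝ => (x:ℂ) ^ (-(s + t))) μ :=
    (hmeasF.aestronglyMeasurable).congr hae
  have hG : Integrable (fun p : ℝ × ℝ => p.1 ^ (-s.re) * (1:ℝ)) μ := by
    rw [hμ]
    refine Integrable.mul_prod (f := fun x : ℝ => x ^ (-s.re)) (g := fun _ : ℝ => (1:ℝ)) (ν := volume.restrict (Ioc (0:ℝ) 1)) ?_ (integrable_const (1:ℝ))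
    exact integrableOn_Ioi_rpow_of_lt (by linarith) one_pos
  refine hG.mono' hsm ?_
  rw [hμr]
  refine ae_restrict_of_forall_mem hmeasset ?_
  rintro ⟨x, t⟩ ⟨hx, ht⟩
  have hx0 : (0:ℝ) < x := lt_trans one_pos hx
  simp only [Function.uncurry]
  rw [Complex.norm_cpow_eq_rpow_re_of_pos hx0]
  rw [mul_one]
  apply Real.rpow_le_rpow_of_exponent_le hx.le
  simp [Complex.add_re]
  linarith [ht.1]

theorem stmt_19 (s : ℂ) (hs : 1 < s.re) :
    ∫ x in Set.Ioi (1:ℝ), (x : ℂ) ^ (-s) * (((1 - 1/x) / Real.log x : ℝ) : ℂ) =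
      Complex.log (s / (s - 1)) := by
  calc ∫ x in Set.Ioi (1:ℝ), (x : ℂ) ^ (-s) * (((1 - 1/x) / Real.log x : ℝ) : ℂ)
      = ∫ x in Set.Ioi (1:ℝ), ∫ t in Set.Ioc (0:ℝ) 1, (x:ℂ) ^ (-(s + t)) := by
        refine (setIntegral_congr_fun measurableSet_Ioi fun x hx => ?_).symm
        exact SectPrf_aux_inner s hx
    _ = ∫ t in Set.Ioc (0:ℝ) 1, ∫ x in Set.Ioi (1:ℝ), (x:ℂ) ^ (-(s + t)) :=
        MeasureTheory.integral_integral_swap (SectPrf_aux_integrable s hs)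
    _ = ∫ t in Set.Ioc (0:ℝ) 1, (s + (t:ℂ) - 1)⁻¹ := by
        refine setIntegral_congr_fun measurableSet_Ioc fun t ht => ?_
        exact SectPrf_aux_xint s hs ht.1.le
    _ = Complex.log (s / (s - 1)) := SectPrf_aux_tint s hs
end
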